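/- arXiv:solv-int/9606008 — 7 statements merged into one kernel-verified Lean document; each statement's English description precedes it below -/
import Mathlib

section
/- Let n ≥ 1, p ∈ ℂ with p ≠ 0, let φ : ℝ → M_n(ℂ) be continuous and 2π-periodic, and let γ : ℝ → M_n(ℂ) be differentiable and 2π-periodic with γ(t) invertible for all t. Define the gauge transform ψ(t) := γ(t)·φ(t)·γ(t)⁻¹ + i·p·γ'(t)·γ(t)⁻¹. If f : ℝ → M_n(ℂ) is differentiable with f(0) = 1 and f'(t) = (1/(ip))·φ(t)·f(t) for all t, then g(t) := γ(t)·f(t)·γ(0)⁻¹ satisfies g(0) = 1 and g'(t) = (1/(ip))·ψ(t)·g(t) for all t; consequently (by uniqueness of solutions) the monodromy of (ψ,p) equals γ(0)·M_{(φ,p)}·γ(0)⁻¹, where M_{(φ,p)} = f(2π). -/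
attribute [local instance] Matrix.linftyOpNormedRing Matrix.linftyOpNormedAlgebra

open Real

/-- Gauge transforming `(φ, p)` by a periodic invertible loop `γ` transforms the
solution of the monodromy equation by `f(t) ↦ γ(t)·f(t)·γ(0)⁻¹`; in particular the
monodromy of the gauge transform is `γ(0)·M_{(φ,p)}·γ(0)⁻¹`. -/
theorem monodromy_of_gauge_transform
    (n : ℕ) (hn : 1 ≤ n) (p : ℂ) (hp : p ≠ 0)
    (φ : ℝ → Matrix (Fin n) (Fin n) ℂ) (hφ : Continuous φ)
    (hφper : ∀ t : ℝ, φ (t + 2 * π) = φ t)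
    (γ γ' : ℝ → Matrix (Fin n) (Fin n) ℂ)
    (hγ : ∀ t : ℝ, HasDerivAt γ (γ' t) t)
    (hγper : ∀ t : ℝ, γ (t + 2 * π) = γ t)
    (hγinv : ∀ t : ℝ, IsUnit (γ t))
    (ψ : ℝ → Matrix (Fin n) (Fin n) ℂ)
    (hψ : ∀ t : ℝ, ψ t = γ t * φ t * (γ t)⁻¹ + (Complex.I * p) • (γ' t * (γ t)⁻¹))
    (f : ℝ → Matrix (Fin n) (Fin n) ℂ)
    (hf0 : f 0 = 1)
    (hf : ∀ t : ℝ, HasDerivAt f ((Complex.I * p)⁻¹ • (φ t * f t)) t)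
    (g : ℝ → Matrix (Fin n) (Fin n) ℂ)
    (hg : ∀ t : ℝ, g t = γ t * f t * (γ 0)⁻¹) :
    g 0 = 1 ∧ (∀ t : ℝ, HasDerivAt g ((Complex.I * p)⁻¹ • (ψ t * g t)) t) ∧
      g (2 * π) = γ 0 * f (2 * π) * (γ 0)⁻¹ := by
  have hip : Complex.I * p ≠ 0 := mul_ne_zero Complex.I_ne_zero hp
  have hinv : ∀ t : ℝ, (γ t)⁻¹ * γ t = 1 := fun t =>
    Matrix.nonsing_inv_mul _ ((Matrix.isUnit_iff_isUnit_det _).mp (hγinv t))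
  have hg' : g = fun t => γ t * f t * (γ 0)⁻¹ := funext hg
  subst hg'
  refine ⟨by simp [hf0, Matrix.mul_nonsing_inv _ ((Matrix.isUnit_iff_isUnit_det _).mp (hγinv 0))], fun t => ?_,
    by simp [show γ (2 * π) = γ 0 from by simpa using hγper 0]⟩
  have hd : HasDerivAt (fun t => γ t * f t * (γ 0)⁻¹)
      ((γ' t * f t + γ t * ((Complex.I * p)⁻¹ • (φ t * f t))) * (γ 0)⁻¹) t :=
    ((hγ t).mul (hf t)).mul_const _
  convert hd using 1
  rw [hψ]
  simp only [add_mul, smul_mul_assoc, smul_add, mul_smul_comm, smul_smul,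
    inv_mul_cancel₀ hip, one_smul]
  have hc : ∀ b : Matrix (Fin n) (Fin n) ℂ, (γ t)⁻¹ * (γ t * b) = b := fun b => by
    rw [← mul_assoc, hinv t, one_mul]
  simp only [mul_assoc, hc]
  abel
end

section
/- Let n ≥ 1, p ∈ ℂ with p ≠ 0, and let φ, φ̃ : ℝ → M_n(ℂ) be continuous and 2π-periodic. Let f, f̃ : ℝ → M_n(ℂ) be differentiable with f(0) = f̃(0) = 1, f'(t) = (1/(ip))·φ(t)·f(t), f̃'(t) = (1/(ip))·φ̃(t)·f̃(t), and with f(t), f̃(t) invertible for all t. Suppose g ∈ GL_n(ℂ) satisfies f(2π) = g·f̃(2π)·g⁻¹. Define γ(t) := f(t)·g·f̃(t)⁻¹. Then γ is differentiable, γ(t) is invertible for all t, γ(2π) = γ(0) = g, and φ(t) = γ(t)·φ̃(t)·γ(t)⁻¹ + i·p·γ'(t)·γ(t)⁻¹ for all t; that is, (φ,p) is the gauge transform of (φ̃,p) by γ. -/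
attribute [local instance] Matrix.linftyOpNormedRing Matrix.linftyOpNormedAlgebra

open Real

private theorem aux_hasDerivAt_inv (n : ℕ) (ft : ℝ → Matrix (Fin n) (Fin n) ℂ)
    (ft' : Matrix (Fin n) (Fin n) ℂ)
    (t : ℝ) (h : HasDerivAt ft ft' t) (hu : IsUnit (ft t)) :
    HasDerivAt (fun s => (ft s)⁻¹) (-((ft t)⁻¹ * ft' * (ft t)⁻¹)) t := by
  obtain ⟨u, hu⟩ := hu
  have h1 : HasFDerivAt Ring.inverse
      (-(ContinuousLinearMap.mulLeftRight ℝ _ (↑u⁻¹) (↑u⁻¹))) (ft t) := by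
    rw [← hu]; exact hasFDerivAt_ringInverse u
  have h2 := h1.comp_hasDerivAt t h
  have e : (fun s => (ft s)⁻¹) = fun s => Ring.inverse (ft s) := by
    funext s; exact Matrix.nonsing_inv_eq_ringInverse _
  rw [e]
  refine h2.congr_deriv (Eq.symm ?_)
  simp only [ContinuousLinearMap.neg_apply, ContinuousLinearMap.mulLeftRight_apply, ← hu,
    Matrix.coe_units_inv]

/-- If the monodromies of `(φ, p)` and `(φ̃, p)` are conjugate by `g`, then
`(φ, p)` is the gauge transform of `(φ̃, p)` by the periodic invertible loop
`γ(t) = f(t)·g·f̃(t)⁻¹`. -/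
theorem gauge_conjugate_of_conjugate_monodromies
    (n : ℕ) (hn : 1 ≤ n) (p : ℂ) (hp : p ≠ 0)
    (φ φt : ℝ → Matrix (Fin n) (Fin n) ℂ)
    (hφ : Continuous φ) (hφt : Continuous φt)
    (hφper : ∀ t : ℝ, φ (t + 2 * π) = φ t)
    (hφtper : ∀ t : ℝ, φt (t + 2 * π) = φt t)
    (f ft : ℝ → Matrix (Fin n) (Fin n) ℂ)
    (hf0 : f 0 = 1) (hft0 : ft 0 = 1)
    (hf : ∀ t : ℝ, HasDerivAt f ((Complex.I * p)⁻¹ • (φ t * f t)) t)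
    (hft : ∀ t : ℝ, HasDerivAt ft ((Complex.I * p)⁻¹ • (φt t * ft t)) t)
    (hfinv : ∀ t : ℝ, IsUnit (f t)) (hftinv : ∀ t : ℝ, IsUnit (ft t))
    (g : Matrix (Fin n) (Fin n) ℂ) (hg : IsUnit g)
    (hconj : f (2 * π) = g * ft (2 * π) * g⁻¹)
    (γ : ℝ → Matrix (Fin n) (Fin n) ℂ)
    (hγ : ∀ t : ℝ, γ t = f t * g * (ft t)⁻¹) :
    ∃ γ' : ℝ → Matrix (Fin n) (Fin n) ℂ,
      (∀ t : ℝ, HasDerivAt γ (γ' t) t) ∧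
      (∀ t : ℝ, IsUnit (γ t)) ∧
      γ (2 * π) = γ 0 ∧ γ 0 = g ∧
      (∀ t : ℝ, φ t = γ t * φt t * (γ t)⁻¹ + (Complex.I * p) • (γ' t * (γ t)⁻¹)) := by
  have hip : Complex.I * p ≠ 0 := mul_ne_zero Complex.I_ne_zero hp
  set c : ℂ := (Complex.I * p)⁻¹ with hc
  have hγfun : γ = fun s => f s * g * (ft s)⁻¹ := funext hγ
  have hγunit : ∀ t, IsUnit (γ t) := by
    intro t
    rw [hγ t]
    have hinv : IsUnit ((ft t)⁻¹) := by
      obtain ⟨u, hu⟩ := hftinv t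
      exact ⟨u⁻¹, by rw [Matrix.coe_units_inv, hu]⟩
    exact ((hfinv t).mul hg).mul hinv
  refine ⟨fun t => c • (φ t * γ t - γ t * φt t), ?_, hγunit, ?_, ?_, ?_⟩
  · intro t
    have hdet : IsUnit (ft t).det := (Matrix.isUnit_iff_isUnit_det _).mp (hftinv t)
    have hinv := aux_hasDerivAt_inv n ft (c • (φt t * ft t)) t (hft t) (hftinv t)
    have hmul := (((hf t).mul_const g).mul hinv)
    rw [hγfun]
    refine hmul.congr_deriv (Eq.symm ?_)
    have key : (ft t)⁻¹ * (c • (φt t * ft t)) * (ft t)⁻¹ = c • ((ft t)⁻¹ * φt t) := by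
      rw [mul_smul_comm, smul_mul_assoc]
      congr 1
      simp [Matrix.mul_assoc, Matrix.mul_nonsing_inv _ hdet]
    beta_reduce
    rw [key]
    rw [smul_sub, smul_mul_assoc, smul_mul_assoc, mul_neg, mul_smul_comm]
    rw [← sub_eq_add_neg]
    congr 2 <;> simp [Matrix.mul_assoc]
  · rw [hγ (2 * π), hγ 0, hconj, hf0, hft0, inv_one, Matrix.one_mul, Matrix.mul_one]
    have hgdet : IsUnit g.det := (Matrix.isUnit_iff_isUnit_det _).mp hg
    have hftdet : IsUnit (ft (2 * π)).det := (Matrix.isUnit_iff_isUnit_det _).mp (hftinv (2 * π))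
    rw [Matrix.mul_assoc (g * ft (2 * π)) g⁻¹ g, Matrix.nonsing_inv_mul _ hgdet, Matrix.mul_one,
      Matrix.mul_assoc, Matrix.mul_nonsing_inv _ hftdet, Matrix.mul_one]
  · rw [hγ 0, hf0, hft0, inv_one, Matrix.one_mul, Matrix.mul_one]
  · intro t
    have hγdet : IsUnit (γ t).det := (Matrix.isUnit_iff_isUnit_det _).mp (hγunit t)
    have h1 : (c • (φ t * γ t - γ t * φt t)) * (γ t)⁻¹
        = c • (φ t - γ t * φt t * (γ t)⁻¹) := by
      rw [smul_mul_assoc]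
      congr 1
      rw [sub_mul, Matrix.mul_assoc (φ t), Matrix.mul_nonsing_inv _ hγdet, Matrix.mul_one]
    rw [h1, smul_smul, mul_inv_cancel₀ hip, one_smul, add_sub_cancel]
end

section
/- Let n ≥ 1, p ∈ ℂ with p ≠ 0, let φ : ℝ → M_n(ℂ) be continuous and 2π-periodic, and let f : ℝ → M_n(ℂ) be differentiable with f(0) = 1, f'(t) = (1/(ip))·φ(t)·f(t), and f(t) invertible for all t. Suppose there exist g ∈ GL_n(ℂ) and a diagonal matrix ξ ∈ M_n(ℂ) with f(2π) = g·exp(ξ)·g⁻¹. Set μ := (ip/(2π))·ξ, a constant diagonal matrix. Then there exists a differentiable map γ : ℝ → M_n(ℂ) with γ(t) invertible for all t and γ(2π) = γ(0), such that φ(t) = γ(t)·μ·γ(t)⁻¹ + i·p·γ'(t)·γ(t)⁻¹ for all t. -/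
attribute [local instance] Matrix.linftyOpNormedRing Matrix.linftyOpNormedAlgebra

open Real

/-- A loop-regular element can be gauge-conjugated to a constant Cartan loop:
if the monodromy of `(φ, p)` is conjugate to `exp ξ` with `ξ` diagonal, then,
setting `μ = (ip/(2π))·ξ`, there is a periodic invertible loop `γ` with
`φ = γ·μ·γ⁻¹ + ip·γ'·γ⁻¹`. -/
theorem loop_regular_gauge_conjugate_to_constant_cartan
    (n : ℕ) (hn : 1 ≤ n) (p : ℂ) (hp : p ≠ 0)
    (φ : ℝ → Matrix (Fin n) (Fin n) ℂ) (hφ : Continuous φ)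
    (hφper : ∀ t : ℝ, φ (t + 2 * π) = φ t)
    (f : ℝ → Matrix (Fin n) (Fin n) ℂ)
    (hf0 : f 0 = 1)
    (hf : ∀ t : ℝ, HasDerivAt f ((Complex.I * p)⁻¹ • (φ t * f t)) t)
    (hfinv : ∀ t : ℝ, IsUnit (f t))
    (g ξ : Matrix (Fin n) (Fin n) ℂ) (hg : IsUnit g) (hξ : ξ.IsDiag)
    (hmono : f (2 * π) = g * NormedSpace.exp ξ * g⁻¹)
    (μ : Matrix (Fin n) (Fin n) ℂ)
    (hμ : μ = (Complex.I * p / (2 * (π : ℂ))) • ξ) :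
    ∃ γ γ' : ℝ → Matrix (Fin n) (Fin n) ℂ,
      (∀ t : ℝ, HasDerivAt γ (γ' t) t) ∧
      (∀ t : ℝ, IsUnit (γ t)) ∧
      γ (2 * π) = γ 0 ∧
      (∀ t : ℝ, φ t = γ t * μ * (γ t)⁻¹ + (Complex.I * p) • (γ' t * (γ t)⁻¹)) := by
  have h2π : (2 * (π : ℂ)) ≠ 0 := by
    simp [Real.pi_ne_zero, Complex.ofReal_ne_zero]
  set B : Matrix (Fin n) (Fin n) ℂ := (-(2 * (π : ℂ))⁻¹) • ξ with hB
  set E : ℝ → Matrix (Fin n) (Fin n) ℂ := fun t => NormedSpace.exp (t • B) with hE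
  have hEderiv : ∀ t : ℝ, HasDerivAt E (B * E t) t := fun t =>
    hasDerivAt_exp_smul_const' (𝕂 := ℝ) B t
  have hexpeq : (NormedSpace.exp : Matrix (Fin n) (Fin n) ℂ → Matrix (Fin n) (Fin n) ℂ)
      = NormedSpace.exp := rfl
  have hE2π : E (2 * π) = NormedSpace.exp (-ξ) := by
    have hs : ((2 * π : ℝ)) • B = -ξ := by
      rw [hB, ← Complex.coe_smul, smul_smul]
      push_cast
      rw [mul_neg, mul_inv_cancel₀ h2π]
      simp
    rw [hE]; simp only [hs, hexpeq]
  have hE0 : E 0 = 1 := by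
    rw [hE]; simp [NormedSpace.exp_zero]
  have hEunit : ∀ t : ℝ, IsUnit (E t) := fun t => NormedSpace.isUnit_exp _
  have hcomm : ∀ t : ℝ, E t * μ = μ * E t := by
    intro t
    have h1 : Commute μ (t • B) := by
      rw [hμ, hB, ← Complex.coe_smul]
      exact (((Commute.refl ξ).smul_left _).smul_right _).smul_right _
    exact (h1.exp_right).symm
  set γ : ℝ → Matrix (Fin n) (Fin n) ℂ := fun t => f t * g * E t with hγ
  set γ' : ℝ → Matrix (Fin n) (Fin n) ℂ := fun t =>
    ((Complex.I * p)⁻¹ • (φ t * f t)) * (g * E t) + (f t * g) * (B * E t) with hγ'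
  have hγunit : ∀ t : ℝ, IsUnit (γ t) := fun t => ((hfinv t).mul hg).mul (hEunit t)
  have hγderiv : ∀ t : ℝ, HasDerivAt γ (γ' t) t := by
    intro t
    have h1 : HasDerivAt (fun t => f t * g) (((Complex.I * p)⁻¹ • (φ t * f t)) * g) t :=
      (hf t).mul_const g
    have h2 := h1.mul (hEderiv t)
    convert h2 using 1
    · rfl
    · rfl
    · rfl
    · rfl
    · simp only [hγ', mul_assoc]
  refine ⟨γ, γ', hγderiv, hγunit, ?_, ?_⟩
  · have hgg : g⁻¹ * g = 1 := Matrix.nonsing_inv_mul g ((Matrix.isUnit_iff_isUnit_det g).mp hg)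
    have hexp : NormedSpace.exp ξ * NormedSpace.exp (-ξ) = 1 := by
      erw [← NormedSpace.exp_add_of_commute (Commute.refl ξ).neg_right]
      simp [NormedSpace.exp_zero]
    show f (2 * π) * g * E (2 * π) = f 0 * g * E 0
    rw [hE2π, hE0, hmono, hf0, one_mul, mul_one]
    calc g * NormedSpace.exp ξ * g⁻¹ * g * NormedSpace.exp (-ξ)
        = g * (NormedSpace.exp ξ * ((g⁻¹ * g) * NormedSpace.exp (-ξ))) := by
          simp only [mul_assoc]
      _ = g := by rw [hgg, one_mul, hexp, mul_one]
  · intro t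
    have hγγ : γ t * (γ t)⁻¹ = 1 :=
      Matrix.mul_nonsing_inv _ ((Matrix.isUnit_iff_isUnit_det _).mp (hγunit t))
    have hipB : (Complex.I * p) • B = -μ := by
      rw [hB, hμ, smul_smul, ← neg_smul]
      congr 1
      field_simp
    have key : (Complex.I * p) • (γ' t) = φ t * γ t - γ t * μ := by
      rw [hγ', smul_add]
      have h2 : (Complex.I * p) • ((Complex.I * p)⁻¹ • (φ t * f t) * (g * E t))
          = φ t * γ t := by
        rw [smul_mul_assoc, smul_smul, mul_inv_cancel₀ (by simp [hp, Complex.I_ne_zero]),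
          one_smul, hγ]
        simp only [mul_assoc]
      have h3 : (Complex.I * p) • ((f t * g) * (B * E t)) = -(γ t * μ) := by
        rw [← mul_smul_comm, ← smul_mul_assoc, hipB, hγ]
        simp only [neg_mul, mul_neg, neg_inj, mul_assoc, hcomm t]
      rw [h2, h3]
      abel
    have hfin : (Complex.I * p) • (γ' t * (γ t)⁻¹) = φ t - γ t * μ * (γ t)⁻¹ := by
      rw [← smul_mul_assoc, key, sub_mul, mul_assoc (φ t), hγγ, mul_one]
    rw [hfin]
    abel
end

section
/- Let n ≥ 1 and let φ : ℝ → M_n(ℂ) be continuous, 2π-periodic, and Hermitian-valued (φ(t)* = φ(t) for all t). Then there exist a differentiable map γ : ℝ → M_n(ℂ) with γ(t) unitary for all t and γ(2π) = γ(0), and a constant diagonal matrix μ with real diagonal entries, such that φ(t) = γ(t)·μ·γ(t)* + i·γ'(t)·γ(t)* for all t. -/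
attribute [local instance] Matrix.linftyOpNormedRing Matrix.linftyOpNormedAlgebra

open Real Matrix

set_option maxHeartbeats 1000000

local notation "Mat" n => Matrix (Fin n) (Fin n) ℂ


lemma abs_integral_abs_pow (k : ℕ) (t : ℝ) :
    |∫ s in (0:ℝ)..t, |s| ^ k| = |t| ^ (k+1) / (k+1) := by
  rcases le_or_gt 0 t with ht | ht
  · have h1 : ∫ s in (0:ℝ)..t, |s| ^ k = ∫ s in (0:ℝ)..t, s ^ k := by
      apply intervalIntegral.integral_congr
      intro s hs
      rw [Set.uIcc_of_le ht] at hs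
      show |s| ^ k = s ^ k
      rw [abs_of_nonneg hs.1]
    rw [h1, integral_pow, zero_pow (Nat.succ_ne_zero k), sub_zero, abs_of_nonneg ht,
      abs_of_nonneg (by positivity)]
  · have h1 : ∫ s in (0:ℝ)..t, |s| ^ k = ∫ s in (0:ℝ)..t, (-1)^k * s ^ k := by
      apply intervalIntegral.integral_congr
      intro s hs
      rw [Set.uIcc_of_ge ht.le] at hs
      show |s| ^ k = (-1)^k * s ^ k
      rw [abs_of_nonpos hs.2, ← neg_pow]
    rw [h1, intervalIntegral.integral_const_mul, integral_pow]
    rw [abs_mul, abs_pow, abs_neg, abs_one, one_pow, one_mul, abs_div,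
      abs_of_nonneg (by positivity : (0:ℝ) ≤ (k:ℝ)+1)]
    simp [abs_pow]

lemma exists_ode_solution (n : ℕ) [Nonempty (Fin n)] (A : ℝ → Mat n) (hA : Continuous A)
    (C : ℝ) (hC : ∀ t, ‖A t‖ ≤ C) :
    ∃ f : ℝ → Mat n, f 0 = 1 ∧ ∀ t, HasDerivAt f (A t * f t) t := by
  have hC0 : 0 ≤ C := le_trans (norm_nonneg _) (hC 0)
  -- the Picard iterates
  set u : ℕ → ℝ → Mat n :=
    fun k => Nat.rec (motive := fun _ => ℝ → Mat n) (fun _ => 1)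
      (fun _ v t => ∫ s in (0:ℝ)..t, A s * v s) k with hu
  have huS : ∀ k t, u (k+1) t = ∫ s in (0:ℝ)..t, A s * u k s := fun _ _ => rfl
  have hcont : ∀ k, Continuous (u k) := by
    intro k
    induction k with
    | zero => exact continuous_const
    | succ k ih =>
      have hder : ∀ t, HasDerivAt (u (k+1)) (A t * u k t) t :=
        fun t => ((hA.mul ih).integral_hasStrictDerivAt 0 t).hasDerivAt
      exact continuous_iff_continuousAt.2 fun t => (hder t).continuousAt
  have hder : ∀ k t, HasDerivAt (u (k+1)) (A t * u k t) t :=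
    fun k t => ((hA.mul (hcont k)).integral_hasStrictDerivAt 0 t).hasDerivAt
  have hbound : ∀ k t, ‖u k t‖ ≤ C^k * |t|^k / (Nat.factorial k) := by
    intro k
    induction k with
    | zero => intro t; simp [hu]
    | succ k ih =>
      intro t
      have hle : ∀ s, ‖A s * u k s‖ ≤ C^(k+1) * |s|^k / (Nat.factorial k) := by
        intro s
        calc ‖A s * u k s‖ ≤ ‖A s‖ * ‖u k s‖ := norm_mul_le _ _
        _ ≤ C * (C^k * |s|^k / (Nat.factorial k)) :=
            mul_le_mul (hC s) (ih s) (norm_nonneg _) hC0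
        _ = C^(k+1) * |s|^k / (Nat.factorial k) := by ring
      have hint : IntervalIntegrable (fun s => C^(k+1) * |s|^k / (Nat.factorial k))
          MeasureTheory.volume 0 t :=
        ((continuous_const.mul (continuous_abs.pow k)).div_const _).intervalIntegrable 0 t
      calc ‖u (k+1) t‖ = ‖∫ s in (0:ℝ)..t, A s * u k s‖ := by rw [huS]
      _ ≤ |∫ s in (0:ℝ)..t, C^(k+1) * |s|^k / (Nat.factorial k)| := by
          apply intervalIntegral.norm_integral_le_abs_of_norm_le _ hint
          exact MeasureTheory.ae_of_all _ (fun s => hle s)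
      _ = C^(k+1) * |t|^(k+1) / (Nat.factorial (k+1)) := by
          have : (fun s => C^(k+1) * |s|^k / (Nat.factorial k))
              = fun s => (C^(k+1) / (Nat.factorial k)) * |s|^k := by funext s; ring
          rw [this, intervalIntegral.integral_const_mul, abs_mul, abs_integral_abs_pow,
            abs_of_nonneg (by positivity : (0:ℝ) ≤ C^(k+1) / (Nat.factorial k)),
            Nat.factorial_succ]
          have hk : ((Nat.factorial k : ℝ)) ≠ 0 := Nat.cast_ne_zero.2 (Nat.factorial_ne_zero k)
          have hk1 : ((k:ℝ)+1) ≠ 0 := by positivity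
          push_cast
          field_simp
  have hsum : ∀ t : ℝ, Summable (fun k => u k t) := by
    intro t
    apply Summable.of_norm_bounded (g := fun k => (C*|t|)^k / (Nat.factorial k))
      (Real.summable_pow_div_factorial _)
    intro k
    calc ‖u k t‖ ≤ C^k * |t|^k / (Nat.factorial k) := hbound k t
    _ = (C*|t|)^k / (Nat.factorial k) := by rw [mul_pow]
  refine ⟨fun t => ∑' k, u k t, ?_, ?_⟩
  · have h1 : ∀ k, k ≠ 0 → u k 0 = 0 := by
      intro k hk
      obtain ⟨m, rfl⟩ := Nat.exists_eq_succ_of_ne_zero hk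
      rw [huS, intervalIntegral.integral_same]
    show (∑' k, u k 0) = 1
    rw [tsum_eq_single 0 h1]
    rfl
  · intro t₀
    set T : ℝ := |t₀| + 1 with hT
    have hT0 : 0 < T := by positivity
    set w : ℕ → ℝ := fun k => Nat.casesOn k 0 (fun m => C^(m+1) * T^m / (Nat.factorial m)) with hw
    have hwsum : Summable w := by
      rw [← summable_nat_add_iff 1]
      have : (fun m => w (m + 1)) = fun m => C * ((C*T)^m / (Nat.factorial m)) := by
        funext m
        show C^(m+1) * T^m / (Nat.factorial m) = _
        rw [mul_pow]; ring
      rw [this]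
      exact (Real.summable_pow_div_factorial _).mul_left C
    set du : ℕ → ℝ → Mat n :=
      fun k => Nat.casesOn k (fun _ => 0) (fun m t => A t * u m t) with hdu
    have hgd : ∀ k y, y ∈ Metric.ball (0:ℝ) T → HasDerivAt (u k) (du k y) y := by
      intro k y _
      cases k with
      | zero => exact hasDerivAt_const _ _
      | succ m => exact hder m y
    have hgb : ∀ k y, y ∈ Metric.ball (0:ℝ) T → ‖du k y‖ ≤ w k := by
      intro k y hy
      have hyT : |y| ≤ T := by
        rw [Metric.mem_ball, Real.dist_0_eq_abs] at hy
        exact hy.le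
      cases k with
      | zero => simp [hdu, hw]
      | succ m =>
        show ‖A y * u m y‖ ≤ C^(m+1) * T^m / (Nat.factorial m)
        calc ‖A y * u m y‖ ≤ ‖A y‖ * ‖u m y‖ := norm_mul_le _ _
        _ ≤ C * (C^m * |y|^m / (Nat.factorial m)) :=
            mul_le_mul (hC y) (hbound m y) (norm_nonneg _) hC0
        _ ≤ C * (C^m * T^m / (Nat.factorial m)) := by
            apply mul_le_mul_of_nonneg_left _ hC0
            apply div_le_div_of_nonneg_right ?_ (by positivity)
            exact mul_le_mul_of_nonneg_left (pow_le_pow_left₀ (abs_nonneg _) hyT m) (by positivity)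
        _ = C^(m+1) * T^m / (Nat.factorial m) := by ring
    have hmem : t₀ ∈ Metric.ball (0:ℝ) T := by
      rw [Metric.mem_ball, Real.dist_0_eq_abs]
      simp [hT]
    have hmain : HasDerivAt (fun t => ∑' k, u k t) (∑' k, du k t₀) t₀ :=
      hasDerivAt_tsum_of_isPreconnected hwsum Metric.isOpen_ball
        (convex_ball (0:ℝ) T).isPreconnected hgd hgb
        (Metric.mem_ball_self hT0) (hsum 0) hmem
    have hdusum : Summable (fun k => du k t₀) :=
      Summable.of_norm_bounded hwsum (fun k => hgb k t₀ hmem)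
    have heq : (∑' k, du k t₀) = A t₀ * ∑' k, u k t₀ := by
      rw [Summable.tsum_eq_zero_add hdusum]
      show (0 : Mat n) + (∑' k, A t₀ * u k t₀) = _
      rw [zero_add]
      exact ((hsum t₀).hasSum.mul_left (A t₀)).tsum_eq
    rw [heq] at hmain
    exact hmain

noncomputable def ctL (n : ℕ) : (Mat n) →L[ℝ] (Mat n) :=
  LinearMap.toContinuousLinearMap
    { toFun := fun X => Xᴴ
      map_add' := fun X Y => Matrix.conjTranspose_add X Y
      map_smul' := fun r X => by
        ext i j
        simp [Matrix.conjTranspose_apply, Complex.real_smul] }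

lemma hasDerivAt_ct {n : ℕ} {f : ℝ → Mat n} {f' : Mat n} {t : ℝ} (h : HasDerivAt f f' t) :
    HasDerivAt (fun s => (f s)ᴴ) (f'ᴴ) t :=
  ((ctL n).hasFDerivAt).comp_hasDerivAt t h

example {n : ℕ} {f : ℝ → Mat n} (hdiff : Differentiable ℝ f) (h0 : ∀ t, deriv f t = 0) (a b : ℝ) :
    f a = f b := is_const_of_deriv_eq_zero hdiff h0 a b

lemma diagonal_eq_sum (n : ℕ) (w : Fin n → ℂ) :
    Matrix.diagonal w = ∑ j, w j • Matrix.single j j (1:ℂ) := by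
  ext i i'
  rw [Matrix.sum_apply]
  rcases eq_or_ne i i' with rfl | h
  · simp [Matrix.single, Matrix.diagonal_apply, Finset.sum_ite_eq']
  · rw [Matrix.diagonal_apply_ne _ h]
    symm
    apply Finset.sum_eq_zero
    intro j _
    rcases eq_or_ne j i with rfl | hj
    · simp [Matrix.single, h]
    · simp [Matrix.single, hj]

lemma hasDerivAt_diagonal (n : ℕ) (v v' : Fin n → ℝ → ℂ) (t : ℝ)
    (h : ∀ j, HasDerivAt (v j) (v' j t) t) :
    HasDerivAt (fun s => Matrix.diagonal (fun j => v j s) : ℝ → Mat n)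
      (Matrix.diagonal (fun j => v' j t)) t := by
  simp only [diagonal_eq_sum]
  exact HasDerivAt.fun_sum (fun j _ => (h j).smul_const _)

lemma hasDerivAt_cexp_real (z : ℂ) (t : ℝ) :
    HasDerivAt (fun s : ℝ => Complex.exp (z * s)) (z * Complex.exp (z * t)) t := by
  have h1 : HasDerivAt (fun s : ℝ => (s : ℂ)) 1 t := Complex.ofRealCLM.hasDerivAt
  have h2 := (h1.const_mul z).cexp
  simpa [mul_comm] using h2

lemma unitary_diagonalization (n : ℕ) [Nonempty (Fin n)] (W : Mat n)
    (hWl : Wᴴ * W = 1) (hWr : W * Wᴴ = 1) :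
    ∃ V : Mat n, ∃ θ : Fin n → ℝ, V * Vᴴ = 1 ∧ Vᴴ * V = 1 ∧
      W = V * Matrix.diagonal (fun j => Complex.exp (θ j * Complex.I)) * Vᴴ := by
  classical
  -- choose a point `c` on the unit circle avoiding the spectrum of `W`
  have hcp : W.charpoly ≠ 0 := (Matrix.charpoly_monic W).ne_zero
  have hfin : {z : ℂ | W.charpoly.IsRoot z}.Finite := Polynomial.finite_setOf_isRoot hcp
  have hinj : Set.InjOn (fun α : ℝ => Complex.exp (α * Complex.I)) (Set.Ico 0 (2*π)) := by
    intro a ha b hb hab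
    obtain ⟨m, hm⟩ := Complex.exp_eq_exp_iff_exists_int.1 hab
    have h2 : a = b + m * (2*π) := by
      have := congrArg Complex.im hm
      simpa using this
    have hm0 : (m:ℝ) = 0 := by
      by_contra hm0
      have h1 : (1:ℝ) ≤ |(m:ℝ)| := by
        have hm' : m ≠ 0 := by exact_mod_cast hm0
        exact_mod_cast Int.one_le_abs hm'
      have hlt : |a - b| < 2*π := by
        rw [abs_sub_lt_iff]
        constructor <;> nlinarith [ha.1, ha.2, hb.1, hb.2, pi_pos]
      rw [h2] at hlt
      simp only [add_sub_cancel_left] at hlt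
      rw [abs_mul, abs_of_nonneg (by positivity : (0:ℝ) ≤ 2*π)] at hlt
      nlinarith [pi_pos]
    rw [h2, hm0]; ring
  have himg : ((fun α : ℝ => Complex.exp (α * Complex.I)) '' (Set.Ico 0 (2*π))).Infinite :=
    (Set.Ico_infinite (by positivity)).image hinj
  obtain ⟨c', hcmem, hcroot⟩ := (himg.diff hfin).nonempty
  obtain ⟨α, -, hα⟩ := hcmem
  set c : ℂ := Complex.exp (α * Complex.I) with hc
  rw [← hα] at hcroot
  have hc1 : ‖c‖ = 1 := Complex.norm_exp_ofReal_mul_I α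
  have hc0 : c ≠ 0 := by
    intro h; rw [h] at hc1; simp at hc1
  have hstarc : star c * c = 1 := by
    rw [mul_comm]
    show c * (starRingEnd ℂ) c = 1
    rw [Complex.mul_conj, Complex.normSq_eq_norm_sq, hc1]
    norm_num
  have hdet : (c • (1 : Mat n) - W).det ≠ 0 := by
    have heval : W.charpoly.eval c = (c • (1 : Mat n) - W).det := by
      rw [Matrix.charpoly, eval_det, Matrix.matPolyEquiv_charmatrix]
      simp [Matrix.scalar_apply, Matrix.smul_one_eq_diagonal]
    rw [← heval]
    exact hcroot
  -- Cayley transform setup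
  set N : Mat n := c⁻¹ • W with hN
  have hstarcinv : star c⁻¹ * c⁻¹ = 1 := by
    rw [star_inv₀, ← mul_inv, hstarc, inv_one]
  have hNl : Nᴴ * N = 1 := by
    rw [hN, Matrix.conjTranspose_smul, smul_mul_assoc, mul_smul_comm, smul_smul, hWl,
      hstarcinv, one_smul]
  have hNr : N * Nᴴ = 1 := by
    rw [hN, Matrix.conjTranspose_smul, smul_mul_assoc, mul_smul_comm, smul_smul, hWr]
    rw [mul_comm] at hstarcinv
    rw [hstarcinv, one_smul]
  set B : Mat n := 1 - N with hB
  have hBeq : c⁻¹ • (c • (1 : Mat n) - W) = B := by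
    rw [smul_sub, smul_smul, inv_mul_cancel₀ hc0, one_smul, hB, hN]
  have hBdet : B.det ≠ 0 := by
    rw [← hBeq, Matrix.det_smul]
    exact mul_ne_zero (pow_ne_zero _ (inv_ne_zero hc0)) hdet
  have hBu : IsUnit B.det := isUnit_iff_ne_zero.2 hBdet
  have hB1 : B * B⁻¹ = 1 := Matrix.mul_nonsing_inv B hBu
  have hB2 : B⁻¹ * B = 1 := Matrix.nonsing_inv_mul B hBu
  have hNB : N * B = B * N := by rw [hB]; simp [mul_sub, sub_mul]
  have hNBi : N * B⁻¹ = B⁻¹ * N := by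
    calc N * B⁻¹ = B⁻¹ * (B * (N * B⁻¹)) := by rw [← mul_assoc, hB2, one_mul]
    _ = B⁻¹ * (N * (B * B⁻¹)) := by rw [← mul_assoc B N, ← hNB, mul_assoc]
    _ = B⁻¹ * N := by rw [hB1, mul_one]
  have hNHB : Nᴴ * B = B * Nᴴ := by rw [hB]; simp [mul_sub, sub_mul, hNl, hNr]
  have hNHBi : Nᴴ * B⁻¹ = B⁻¹ * Nᴴ := by
    calc Nᴴ * B⁻¹ = B⁻¹ * (B * (Nᴴ * B⁻¹)) := by rw [← mul_assoc, hB2, one_mul]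
    _ = B⁻¹ * (Nᴴ * (B * B⁻¹)) := by rw [← mul_assoc B Nᴴ, ← hNHB, mul_assoc]
    _ = B⁻¹ * Nᴴ := by rw [hB1, mul_one]
  set S : Mat n := Complex.I • ((1 + N) * B⁻¹) with hS
  have hBH : Bᴴ = 1 - Nᴴ := by rw [hB, Matrix.conjTranspose_sub, Matrix.conjTranspose_one]
  have hBHinv : (Bᴴ)⁻¹ = -(B⁻¹ * N) := by
    apply Matrix.inv_eq_right_inv
    rw [hBH]
    calc (1 - Nᴴ) * -(B⁻¹ * N) = Nᴴ * (B⁻¹ * N) - B⁻¹ * N := by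
          rw [mul_neg, sub_mul, one_mul, neg_sub]
    _ = B⁻¹ * (Nᴴ * N) - B⁻¹ * N := by rw [← mul_assoc, hNHBi, mul_assoc]
    _ = B⁻¹ * (1 - N) := by rw [hNl, mul_one, mul_sub, mul_one]
    _ = 1 := hB2
  have honeN : (1 + N) * B⁻¹ = B⁻¹ * (1 + N) := by
    rw [add_mul, mul_add, one_mul, mul_one, hNBi]
  have hSH : S.IsHermitian := by
    show Sᴴ = S
    rw [hS, Matrix.conjTranspose_smul, Matrix.conjTranspose_mul,
      Matrix.conjTranspose_nonsing_inv, hBHinv, Matrix.conjTranspose_add,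
      Matrix.conjTranspose_one]
    have h1 : -(B⁻¹ * N) * (1 + Nᴴ) = -(B⁻¹ * (1 + N)) := by
      rw [neg_mul]
      congr 1
      calc (B⁻¹ * N) * (1 + Nᴴ) = B⁻¹ * N + B⁻¹ * (N * Nᴴ) := by
            rw [mul_add, mul_one, mul_assoc]
      _ = B⁻¹ * (1 + N) := by rw [hNr, mul_one, mul_add, mul_one, add_comm]
    rw [h1, ← honeN]
    show star Complex.I • (-((1+N) * B⁻¹)) = Complex.I • ((1+N) * B⁻¹)
    rw [Complex.star_def, Complex.conj_I, smul_neg, neg_smul, neg_neg]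
  have e1 : S + Complex.I • (1 : Mat n) = (2*Complex.I) • B⁻¹ := by
    have h2 : (1 + N) + B = (2:ℂ) • (1 : Mat n) := by
      rw [hB, two_smul]; abel
    calc S + Complex.I • (1 : Mat n)
        = Complex.I • ((1+N) * B⁻¹) + Complex.I • (B * B⁻¹) := by rw [hS, hB1]
    _ = Complex.I • (((1+N) + B) * B⁻¹) := by rw [← smul_add, ← add_mul]
    _ = (2*Complex.I) • B⁻¹ := by
        rw [h2, smul_mul_assoc, one_mul, smul_smul, mul_comm]
  have e2 : S - Complex.I • (1 : Mat n) = (2*Complex.I) • (N * B⁻¹) := by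
    have h2 : (1 + N) - B = (2:ℂ) • N := by rw [hB, two_smul]; abel
    calc S - Complex.I • (1 : Mat n)
        = Complex.I • ((1+N) * B⁻¹) - Complex.I • (B * B⁻¹) := by rw [hS, hB1]
    _ = Complex.I • (((1+N) - B) * B⁻¹) := by rw [← smul_sub, ← sub_mul]
    _ = (2*Complex.I) • (N * B⁻¹) := by rw [h2, smul_mul_assoc, smul_smul, mul_comm]
  have key : N * (S + Complex.I • (1 : Mat n)) = S - Complex.I • (1 : Mat n) := by
    rw [e1, e2, mul_smul_comm]
  -- spectral theorem for S
  set V : Mat n := (hSH.eigenvectorUnitary : Mat n) with hV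
  set sv : Fin n → ℝ := hSH.eigenvalues with hsv
  set D : Mat n := Matrix.diagonal (RCLike.ofReal ∘ sv) with hD
  have hVr : V * Vᴴ = 1 := by
    rw [hV, ← Matrix.star_eq_conjTranspose]
    exact Matrix.mem_unitaryGroup_iff.mp hSH.eigenvectorUnitary.2
  have hVl : Vᴴ * V = 1 := by
    rw [hV, ← Matrix.star_eq_conjTranspose]
    exact Matrix.mem_unitaryGroup_iff'.mp hSH.eigenvectorUnitary.2
  have hspec : S = V * D * Vᴴ := by
    have h := hSH.spectral_theorem
    rwa [← Matrix.star_eq_conjTranspose]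
  have hplus : V * (D + Complex.I • 1) * Vᴴ = S + Complex.I • (1 : Mat n) := by
    rw [mul_add, add_mul, mul_smul_comm, mul_one, smul_mul_assoc, hVr, hspec]
  have hminus : V * (D - Complex.I • 1) * Vᴴ = S - Complex.I • (1 : Mat n) := by
    rw [mul_sub, sub_mul, mul_smul_comm, mul_one, smul_mul_assoc, hVr, hspec]
  have key2 : N * (V * (D + Complex.I • 1) * Vᴴ) = V * (D - Complex.I • 1) * Vᴴ := by
    rw [hplus, hminus, key]
  have conj_cancel : ∀ X : Mat n, Vᴴ * (V * X * Vᴴ) * V = X := by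
    intro X
    calc Vᴴ * (V * X * Vᴴ) * V = ((Vᴴ * V) * X) * (Vᴴ * V) := by simp only [mul_assoc]
    _ = X := by rw [hVl, one_mul, mul_one]
  have hL : Vᴴ * (N * (V * (D + Complex.I • 1) * Vᴴ)) * V
      = (Vᴴ * N * V) * (D + Complex.I • 1) := by
    calc Vᴴ * (N * (V * (D + Complex.I • 1) * Vᴴ)) * V
        = (Vᴴ * N * V) * ((D + Complex.I • 1) * (Vᴴ * V)) := by simp only [mul_assoc]
    _ = (Vᴴ * N * V) * (D + Complex.I • 1) := by rw [hVl, mul_one]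
  have hP : (Vᴴ * N * V) * (D + Complex.I • 1) = D - Complex.I • 1 := by
    have h3 := congrArg (fun X => Vᴴ * X * V) key2
    rw [← hL, h3, conj_cancel]
  have hofReal : (RCLike.ofReal ∘ sv : Fin n → ℂ) = fun j => (sv j : ℂ) := rfl
  have hne : ∀ j : Fin n, ((sv j : ℂ) + Complex.I) ≠ 0 := by
    intro j h
    have := congrArg Complex.im h
    simpa using this
  have hDplus : D + Complex.I • (1 : Mat n)
      = Matrix.diagonal (fun j => (sv j : ℂ) + Complex.I) := by
    rw [hD, hofReal, Matrix.smul_one_eq_diagonal, Matrix.diagonal_add]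
  have hDminus : D - Complex.I • (1 : Mat n)
      = Matrix.diagonal (fun j => (sv j : ℂ) - Complex.I) := by
    rw [hD, hofReal, Matrix.smul_one_eq_diagonal, Matrix.diagonal_sub]
  rw [hDplus, hDminus] at hP
  set ν : Fin n → ℂ := fun j => ((sv j : ℂ) - Complex.I) * ((sv j : ℂ) + Complex.I)⁻¹ with hν
  have hinvd : Matrix.diagonal (fun j => (sv j : ℂ) + Complex.I)
      * Matrix.diagonal (fun j => ((sv j : ℂ) + Complex.I)⁻¹) = 1 := by
    have h5 : (fun j => ((sv j : ℂ) + Complex.I) * ((sv j : ℂ) + Complex.I)⁻¹)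
        = fun _ : Fin n => (1:ℂ) := by
      funext j; exact mul_inv_cancel₀ (hne j)
    rw [Matrix.diagonal_mul_diagonal]
    show Matrix.diagonal (fun j => ((sv j : ℂ) + Complex.I) * ((sv j : ℂ) + Complex.I)⁻¹) = 1
    rw [h5, Matrix.diagonal_one]
  have hPdiag : Vᴴ * N * V = Matrix.diagonal ν := by
    calc Vᴴ * N * V
        = (Vᴴ * N * V) * (Matrix.diagonal (fun j => (sv j : ℂ) + Complex.I)
            * Matrix.diagonal (fun j => ((sv j : ℂ) + Complex.I)⁻¹)) := by
          rw [hinvd, mul_one]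
    _ = (Matrix.diagonal (fun j => (sv j : ℂ) - Complex.I))
          * Matrix.diagonal (fun j => ((sv j : ℂ) + Complex.I)⁻¹) := by
          rw [← mul_assoc, hP]
    _ = Matrix.diagonal ν := by rw [Matrix.diagonal_mul_diagonal]
  have hNdiag : N = V * Matrix.diagonal ν * Vᴴ := by
    have h4 := congrArg (fun X => V * X * Vᴴ) hPdiag
    have hcc : V * (Vᴴ * N * V) * Vᴴ = N := by
      calc V * (Vᴴ * N * V) * Vᴴ = ((V * Vᴴ) * N) * (V * Vᴴ) := by simp only [mul_assoc]
      _ = N := by rw [hVr, one_mul, mul_one]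
    rw [← hcc, h4]
  have hWN : W = c • N := by rw [hN, smul_smul, mul_inv_cancel₀ hc0, one_smul]
  have hWdiag : W = V * Matrix.diagonal (fun j => c * ν j) * Vᴴ := by
    have hdc : Matrix.diagonal (fun j => c * ν j) = c • Matrix.diagonal ν :=
      Matrix.diagonal_smul c ν
    rw [hWN, hNdiag, hdc, mul_smul_comm, smul_mul_assoc]
  have habs : ∀ j, ‖c * ν j‖ = 1 := by
    intro j
    have hconj : (starRingEnd ℂ) ((sv j : ℂ) + Complex.I) = (sv j : ℂ) - Complex.I := by
      simp [Complex.ext_iff]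
    have habs2 : ‖(sv j : ℂ) - Complex.I‖ = ‖(sv j : ℂ) + Complex.I‖ := by
      rw [← hconj, Complex.norm_conj]
    have habsne : ‖(sv j : ℂ) + Complex.I‖ ≠ 0 := by
      simpa using hne j
    show ‖c * (((sv j : ℂ) - Complex.I) * ((sv j : ℂ) + Complex.I)⁻¹)‖ = 1
    rw [norm_mul, norm_mul, norm_inv, hc1, habs2, one_mul,
      mul_inv_cancel₀ habsne]
  refine ⟨V, fun j => Complex.arg (c * ν j), hVr, hVl, ?_⟩
  have h6 : (fun j => Complex.exp (↑(Complex.arg (c * ν j)) * Complex.I))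
      = fun j => c * ν j := by
    funext j
    have h7 := Complex.norm_mul_exp_arg_mul_I (c * ν j)
    rw [habs j, Complex.ofReal_one, one_mul] at h7
    exact h7
  rw [hWdiag]
  simp only []
  rw [h6]

/-- A Hermitian-valued periodic loop `φ` can be gauge-conjugated by a periodic
unitary loop `γ` to a constant real diagonal matrix `μ`:
`φ = γ·μ·γ* + i·γ'·γ*`. -/
theorem hermitian_loop_gauge_conjugate_by_unitary_to_real_diagonal
    (n : ℕ) (hn : 1 ≤ n)
    (φ : ℝ → Matrix (Fin n) (Fin n) ℂ) (hφ : Continuous φ)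
    (hφper : ∀ t : ℝ, φ (t + 2 * π) = φ t)
    (hherm : ∀ t : ℝ, (φ t)ᴴ = φ t) :
    ∃ γ γ' : ℝ → Matrix (Fin n) (Fin n) ℂ, ∃ d : Fin n → ℝ,
      (∀ t : ℝ, HasDerivAt γ (γ' t) t) ∧
      (∀ t : ℝ, γ t ∈ Matrix.unitaryGroup (Fin n) ℂ) ∧
      γ (2 * π) = γ 0 ∧
      (∀ t : ℝ, φ t =
        γ t * Matrix.diagonal (fun i => (d i : ℂ)) * (γ t)ᴴ +
          Complex.I • (γ' t * (γ t)ᴴ)) := by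
  haveI : Nonempty (Fin n) := ⟨⟨0, hn⟩⟩
  -- a global bound on φ from periodicity
  obtain ⟨C, hC⟩ : ∃ C, ∀ t, ‖φ t‖ ≤ C := by
    obtain ⟨C, hC⟩ :=
      (isCompact_Icc (a := (0:ℝ)) (b := 2*π)).exists_bound_of_continuousOn hφ.continuousOn
    refine ⟨C, fun t => ?_⟩
    have hper : Function.Periodic φ (2*π) := hφper
    obtain ⟨s, hs, heq⟩ := hper.exists_mem_Ico₀ (by positivity) t
    rw [heq]
    exact hC s ⟨hs.1, hs.2.le⟩
  -- the fundamental solution f of f' = -i φ f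
  obtain ⟨f, hf0, hfd⟩ := exists_ode_solution n (fun t => (-Complex.I) • φ t)
    (hφ.fun_const_smul _) C
    (fun t => by
      rw [norm_smul, norm_neg, Complex.norm_I, one_mul]; exact hC t)
  have hfd' : ∀ t, HasDerivAt f ((-Complex.I) • (φ t * f t)) t := by
    intro t
    have h := hfd t
    rwa [smul_mul_assoc] at h
  -- f is unitary
  have hconst : ∀ t, (f t)ᴴ * f t = 1 := by
    have hg : ∀ t, HasDerivAt (fun s => (f s)ᴴ * f s) 0 t := by
      intro t
      have h := (hasDerivAt_ct (hfd' t)).mul (hfd' t)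
      have hz : ((-Complex.I) • (φ t * f t))ᴴ * f t
          + (f t)ᴴ * ((-Complex.I) • (φ t * f t)) = 0 := by
        rw [Matrix.conjTranspose_smul, Matrix.conjTranspose_mul, hherm]
        have hsI : star (-Complex.I) = Complex.I := by simp
        rw [hsI, smul_mul_assoc, mul_smul_comm, mul_assoc, ← add_smul]
        simp
      rwa [hz] at h
    intro t
    have h0 : (fun s => (f s)ᴴ * f s) t = (fun s => (f s)ᴴ * f s) 0 :=
      is_const_of_deriv_eq_zero (fun s => (hg s).differentiableAt)
        (fun s => (hg s).deriv) t 0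
    simp only [] at h0
    rw [h0, hf0, Matrix.conjTranspose_one, one_mul]
  have hmem : ∀ t, f t ∈ Matrix.unitaryGroup (Fin n) ℂ := fun t =>
    Matrix.mem_unitaryGroup_iff'.2 (by rw [Matrix.star_eq_conjTranspose]; exact hconst t)
  have hunit : ∀ t, f t * (f t)ᴴ = 1 := by
    intro t
    have h := Matrix.mem_unitaryGroup_iff.1 (hmem t)
    rwa [Matrix.star_eq_conjTranspose] at h
  -- diagonalize the monodromy W = (f 2π)ᴴ
  obtain ⟨V, θ, hVr, hVl, hWdiag⟩ := unitary_diagonalization n ((f (2*π))ᴴ)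
    (by rw [Matrix.conjTranspose_conjTranspose]; exact hunit (2*π))
    (by rw [Matrix.conjTranspose_conjTranspose]; exact hconst (2*π))
  set d : Fin n → ℝ := fun j => θ j / (2*π) with hd
  set z : Fin n → ℂ := fun j => (d j : ℂ) * Complex.I with hz
  set μ : Mat n := Matrix.diagonal (fun i => (d i : ℂ)) with hμ
  set e : ℝ → Mat n := fun t => Matrix.diagonal (fun j => Complex.exp (z j * t)) with he
  set e' : ℝ → Mat n :=
    fun t => Matrix.diagonal (fun j => z j * Complex.exp (z j * t)) with he'
  have hed : ∀ t, HasDerivAt e (e' t) t := fun t =>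
    hasDerivAt_diagonal n (fun j s => Complex.exp (z j * s))
      (fun j s => z j * Complex.exp (z j * s)) t (fun j => hasDerivAt_cexp_real (z j) t)
  have hze : ∀ (j : Fin n) (t : ℝ), Complex.exp (z j * t) * star (Complex.exp (z j * t)) = 1 := by
    intro j t
    have hzt : z j * (t : ℂ) = ((d j * t : ℝ) : ℂ) * Complex.I := by
      rw [hz]; push_cast; ring
    show Complex.exp (z j * t) * (starRingEnd ℂ) (Complex.exp (z j * t)) = 1
    rw [hzt, Complex.mul_conj, Complex.normSq_eq_norm_sq, Complex.norm_exp_ofReal_mul_I]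
    norm_num
  have heR : ∀ t, e t * (e t)ᴴ = 1 := by
    intro t
    rw [he]
    show Matrix.diagonal _ * (Matrix.diagonal _)ᴴ = 1
    rw [Matrix.diagonal_conjTranspose, Matrix.diagonal_mul_diagonal]
    have h5 : (fun j => Complex.exp (z j * t) * star (Complex.exp (z j * t)))
        = fun _ : Fin n => (1:ℂ) := by
      funext j; exact hze j t
    show Matrix.diagonal (fun j => Complex.exp (z j * t) * star (Complex.exp (z j * t))) = 1
    rw [h5, Matrix.diagonal_one]
  have hecomm : ∀ t, e t * μ * (e t)ᴴ = μ := by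
    intro t
    rw [he, hμ]
    show Matrix.diagonal _ * Matrix.diagonal _ * (Matrix.diagonal _)ᴴ = Matrix.diagonal _
    rw [Matrix.diagonal_conjTranspose, Matrix.diagonal_mul_diagonal,
      Matrix.diagonal_mul_diagonal]
    exact congrArg Matrix.diagonal (funext fun j => by
      show Complex.exp (z j * t) * (d j : ℂ) * star (Complex.exp (z j * t)) = (d j : ℂ)
      rw [mul_right_comm, hze, one_mul])
  have he'eH : ∀ t, e' t * (e t)ᴴ = Complex.I • μ := by
    intro t
    rw [he, he', hμ]
    show Matrix.diagonal _ * (Matrix.diagonal _)ᴴ = Complex.I • Matrix.diagonal _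
    rw [Matrix.diagonal_conjTranspose, Matrix.diagonal_mul_diagonal,
      ← Matrix.diagonal_smul]
    exact congrArg Matrix.diagonal (funext fun j => by
      show z j * Complex.exp (z j * t) * star (Complex.exp (z j * t)) = Complex.I * (d j : ℂ)
      rw [mul_assoc, hze, mul_one]
      show (d j : ℂ) * Complex.I = Complex.I * (d j : ℂ)
      rw [mul_comm])
  have he0 : e 0 = 1 := by
    rw [he]
    show Matrix.diagonal _ = 1
    have h5 : (fun j => Complex.exp (z j * ((0:ℝ) : ℂ))) = fun _ : Fin n => (1:ℂ) := by
      funext j; norm_num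
    rw [h5, Matrix.diagonal_one]
  have h5 : ∀ j : Fin n, z j * (((2*π : ℝ)) : ℂ) = (θ j : ℂ) * Complex.I := by
    intro j
    show ((θ j / (2*π) : ℝ) : ℂ) * Complex.I * (((2*π : ℝ)) : ℂ) = _
    rw [mul_right_comm, ← Complex.ofReal_mul,
      div_mul_cancel₀ _ (by positivity : (2*π : ℝ) ≠ 0)]
  have he2π : e (2*π) = Matrix.diagonal (fun j => Complex.exp (θ j * Complex.I)) := by
    rw [he]
    exact congrArg Matrix.diagonal (funext fun j => congrArg Complex.exp (h5 j))
  -- the gauge transformation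
  have hmulcancel : ∀ P Q : Mat n, P * Q = 1 → ∀ Z : Mat n, P * (Q * Z) = Z := by
    intro P Q h Z; rw [← mul_assoc, h, one_mul]
  refine ⟨fun t => f t * V * e t,
    fun t => ((-Complex.I) • (φ t * f t)) * V * e t + (f t * V) * e' t,
    d, ?_, ?_, ?_, ?_⟩
  · intro t
    exact ((hfd' t).mul_const V).mul (hed t)
  · intro t
    apply Matrix.mem_unitaryGroup_iff.2
    show (f t * V * e t) * star (f t * V * e t) = 1
    rw [Matrix.star_eq_conjTranspose, Matrix.conjTranspose_mul, Matrix.conjTranspose_mul]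
    calc (f t * V * e t) * ((e t)ᴴ * (Vᴴ * (f t)ᴴ))
        = f t * (V * (e t * ((e t)ᴴ * (Vᴴ * (f t)ᴴ)))) := by
          simp only [mul_assoc]
    _ = f t * (V * (Vᴴ * (f t)ᴴ)) := by rw [hmulcancel _ _ (heR t)]
    _ = f t * (f t)ᴴ := by rw [hmulcancel _ _ hVr]
    _ = 1 := hunit t
  · show f (2*π) * V * e (2*π) = f 0 * V * e 0
    rw [hf0, he0, one_mul, mul_one, he2π]
    have h8 : V * Matrix.diagonal (fun j => Complex.exp (θ j * Complex.I))
        = (f (2*π))ᴴ * V := by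
      rw [hWdiag]
      simp only [mul_assoc]
      rw [hVl, mul_one]
    rw [mul_assoc, h8, ← mul_assoc, hunit (2*π), one_mul]
  · intro t
    have hγH : (f t * V * e t)ᴴ = (e t)ᴴ * (Vᴴ * (f t)ᴴ) := by
      rw [Matrix.conjTranspose_mul, Matrix.conjTranspose_mul]
    have hsand : ∀ Z : Mat n, e t * (μ * ((e t)ᴴ * Z)) = μ * Z := by
      intro Z
      calc e t * (μ * ((e t)ᴴ * Z)) = (e t * μ * (e t)ᴴ) * Z := by simp only [mul_assoc]
      _ = μ * Z := by rw [hecomm t]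
    have hsand2 : ∀ Z : Mat n, e' t * ((e t)ᴴ * Z) = Complex.I • (μ * Z) := by
      intro Z
      calc e' t * ((e t)ᴴ * Z) = (e' t * (e t)ᴴ) * Z := by simp only [mul_assoc]
      _ = Complex.I • (μ * Z) := by rw [he'eH t, smul_mul_assoc]
    have hQeq : (f t * V * e t) * μ * ((e t)ᴴ * (Vᴴ * (f t)ᴴ))
        = f t * (V * (μ * (Vᴴ * (f t)ᴴ))) := by
      calc (f t * V * e t) * μ * ((e t)ᴴ * (Vᴴ * (f t)ᴴ))
          = f t * (V * (e t * (μ * ((e t)ᴴ * (Vᴴ * (f t)ᴴ))))) := by simp only [mul_assoc]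
      _ = f t * (V * (μ * (Vᴴ * (f t)ᴴ))) := by rw [hsand]
    have h_t1 : ((-Complex.I) • (φ t * f t)) * V * e t * ((e t)ᴴ * (Vᴴ * (f t)ᴴ))
        = (-Complex.I) • φ t := by
      calc ((-Complex.I) • (φ t * f t)) * V * e t * ((e t)ᴴ * (Vᴴ * (f t)ᴴ))
          = ((-Complex.I) • (φ t * f t)) * (V * (e t * ((e t)ᴴ * (Vᴴ * (f t)ᴴ)))) := by
            simp only [mul_assoc]
      _ = ((-Complex.I) • (φ t * f t)) * (V * (Vᴴ * (f t)ᴴ)) := by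
            rw [hmulcancel _ _ (heR t)]
      _ = ((-Complex.I) • (φ t * f t)) * (f t)ᴴ := by rw [hmulcancel _ _ hVr]
      _ = (-Complex.I) • (φ t * (f t * (f t)ᴴ)) := by rw [smul_mul_assoc, mul_assoc]
      _ = (-Complex.I) • φ t := by rw [hunit t, mul_one]
    have h_t2 : (f t * V) * e' t * ((e t)ᴴ * (Vᴴ * (f t)ᴴ))
        = Complex.I • (f t * (V * (μ * (Vᴴ * (f t)ᴴ)))) := by
      calc (f t * V) * e' t * ((e t)ᴴ * (Vᴴ * (f t)ᴴ))
          = f t * (V * (e' t * ((e t)ᴴ * (Vᴴ * (f t)ᴴ)))) := by simp only [mul_assoc]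
      _ = f t * (V * (Complex.I • (μ * (Vᴴ * (f t)ᴴ)))) := by rw [hsand2]
      _ = Complex.I • (f t * (V * (μ * (Vᴴ * (f t)ᴴ)))) := by
            rw [mul_smul_comm, mul_smul_comm]
    show φ t = (f t * V * e t) * μ * (f t * V * e t)ᴴ
        + Complex.I • ((((-Complex.I) • (φ t * f t)) * V * e t + (f t * V) * e' t)
            * (f t * V * e t)ᴴ)
    rw [hγH, add_mul, hQeq, h_t1, h_t2, smul_add, smul_smul, smul_smul]
    have hII : Complex.I * -Complex.I = 1 := by
      rw [mul_neg, Complex.I_mul_I, neg_neg]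
    rw [hII, one_smul, Complex.I_mul_I, neg_one_smul]
    abel
end

section
/- Let n ≥ 1, let μ ∈ M_n(ℂ) be diagonal, and let p ∈ ℂ be such that for all k ∈ ℤ and all indices a, b ∈ {1,…,n} with (k, a) ≠ (0, b) when a = b (i.e. whenever k ≠ 0 or a ≠ b), one has p·k + μ_{aa} − μ_{bb} ≠ 0. Then for every finitely supported function ψ : ℤ → M_n(ℂ) there exist a unique diagonal matrix ξ ∈ M_n(ℂ) and a unique finitely supported ν : ℤ → M_n(ℂ) whose zero mode ν(0) has all diagonal entries equal to 0, such that for every k ∈ ℤ: ψ(k) = (if k = 0 then ξ else 0) + (μ·ν(k) − ν(k)·μ) + (p·k)·ν(k). -/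
open Matrix

lemma comm_entry_of_isDiag {n : ℕ} {μ : Matrix (Fin n) (Fin n) ℂ} (hμ : μ.IsDiag)
    (M : Matrix (Fin n) (Fin n) ℂ) (a b : Fin n) :
    (μ * M - M * μ) a b = (μ a a - μ b b) * M a b := by
  have h : (Matrix.diagonal μ.diag) = μ := hμ.diagonal_diag
  rw [← h]
  simp [Matrix.diagonal_mul, Matrix.mul_diagonal, Matrix.diag]
  ring

/-- The splitting `L𝔤^ = (𝔥 × ℂ) ⊕ ad*_{L𝔤}(μ, p)` at the level of Fourier
coefficients: under the loop-regularity condition on the constant Cartan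
element `(μ, p)`, every finitely supported loop `ψ` decomposes uniquely as a
constant diagonal part `ξ` plus `[μ, ν(k)] + p·k·ν(k)` with `ν` finitely
supported and the zero mode of `ν` having vanishing diagonal. -/
theorem loop_splitting_constant_cartan_plus_coadjoint
    (n : ℕ) (hn : 1 ≤ n) (μ : Matrix (Fin n) (Fin n) ℂ) (hμ : μ.IsDiag)
    (p : ℂ)
    (hreg : ∀ (k : ℤ) (a b : Fin n), (k ≠ 0 ∨ a ≠ b) →
      p * (k : ℂ) + μ a a - μ b b ≠ 0)
    (ψ : ℤ →₀ Matrix (Fin n) (Fin n) ℂ) :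
    ∃! x : Matrix (Fin n) (Fin n) ℂ × (ℤ →₀ Matrix (Fin n) (Fin n) ℂ),
      x.1.IsDiag ∧ (∀ a : Fin n, x.2 0 a a = 0) ∧
      ∀ k : ℤ, ψ k = (if k = 0 then x.1 else 0) +
        (μ * x.2 k - x.2 k * μ) + (p * (k : ℂ)) • x.2 k := by
  classical
  set ξ : Matrix (Fin n) (Fin n) ℂ := Matrix.diagonal (fun a => ψ 0 a a) with hξ
  set f : ℤ → Matrix (Fin n) (Fin n) ℂ := fun k =>
    Matrix.of fun a b => if k = 0 ∧ a = b then 0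
      else ψ k a b / (p * (k : ℂ) + μ a a - μ b b) with hf
  have hsupp : ∀ k : ℤ, f k ≠ 0 → k ∈ ψ.support := by
    intro k hk
    by_contra h
    apply hk
    have hψ : ψ k = 0 := Finsupp.notMem_support_iff.mp h
    ext a b
    simp [hf, hψ]
  set ν : ℤ →₀ Matrix (Fin n) (Fin n) ℂ := Finsupp.onFinset ψ.support f hsupp with hν
  have hνk : ∀ k, ν k = f k := fun k => rfl
  -- the key entrywise identity
  have key : ∀ (ξ' : Matrix (Fin n) (Fin n) ℂ) (ν' : ℤ →₀ Matrix (Fin n) (Fin n) ℂ)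
      (k : ℤ) (a b : Fin n),
      ((if k = 0 then ξ' else 0) + (μ * ν' k - ν' k * μ) + (p * (k:ℂ)) • ν' k) a b
        = (if k = 0 then ξ' a b else 0) + (p * (k:ℂ) + μ a a - μ b b) * ν' k a b := by
    intro ξ' ν' k a b
    simp only [Matrix.add_apply, Matrix.smul_apply, smul_eq_mul,
      comm_entry_of_isDiag hμ]
    by_cases hk : k = 0 <;> simp [hk] <;> ring
  refine ⟨(ξ, ν), ⟨Matrix.isDiag_diagonal _, ?_, ?_⟩, ?_⟩
  · intro a; simp [hνk, hf]
  · intro k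
    ext a b
    rw [key]
    dsimp only
    by_cases hk : k = 0
    · subst hk
      rw [if_pos rfl]
      by_cases hab : a = b
      · subst hab
        simp [hξ, hνk, hf, Matrix.diagonal_apply_eq]
      · have hne := hreg 0 a b (Or.inr hab)
        rw [hξ, Matrix.diagonal_apply_ne _ hab, zero_add, hνk, hf]
        simp only [Matrix.of_apply]
        rw [if_neg (show ¬(True ∧ a = b) from fun h => hab h.2), mul_comm,
          div_mul_cancel₀ _ hne]
    · have hne := hreg k a b (Or.inl hk)
      rw [if_neg hk, zero_add, hνk, hf]
      simp only [Matrix.of_apply]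
      rw [if_neg (show ¬(k = 0 ∧ a = b) by tauto), mul_comm,
        div_mul_cancel₀ _ hne]
  · rintro ⟨ξ', ν'⟩ ⟨hdiag, hzero, heq⟩
    dsimp only at hdiag hzero heq
    have hentry : ∀ (k : ℤ) (a b : Fin n),
        ψ k a b = (if k = 0 then ξ' a b else 0)
          + (p * (k:ℂ) + μ a a - μ b b) * ν' k a b := by
      intro k a b
      have h := congrArg (fun M => M a b) (heq k)
      simpa only [key ξ' ν' k a b] using h
    have hξ' : ξ' = ξ := by
      ext a b
      by_cases hab : a = b
      · subst hab
        have h := hentry 0 a a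
        simp [hzero a] at h
        simp [hξ, Matrix.diagonal_apply_eq, h]
      · rw [hdiag hab, hξ, Matrix.diagonal_apply_ne _ hab]
    have hν' : ν' = ν := by
      ext k a b
      rw [hνk, hf]
      by_cases h : k = 0 ∧ a = b
      · obtain ⟨hk, hab⟩ := h; subst hk; subst hab
        simp [hzero a]
      · have hor : k ≠ 0 ∨ a ≠ b := by tauto
        have hne := hreg k a b hor
        have he := hentry k a b
        simp only [Matrix.of_apply, if_neg h]
        by_cases hk : k = 0
        · have hab : a ≠ b := by tauto
          rw [if_pos hk, hdiag hab, zero_add] at he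
          rw [eq_div_iff hne, mul_comm, ← he]
        · rw [if_neg hk, zero_add] at he
          rw [eq_div_iff hne, mul_comm, ← he]
    simp [hξ', hν']
end

section
/- Let n ≥ 1 and let μ ∈ M_n(ℂ) be diagonal such that the diagonal entries of exp(−2πi·μ) are pairwise distinct. Let γ : ℝ → M_n(ℂ) be differentiable with γ(t) invertible and γ(t + 2π) = γ(t) for all t, and suppose γ'(t) = i·(γ(t)·μ − μ·γ(t)) for all t. Then γ is constant (γ(t) = γ(0) for all t) and γ(0) is a diagonal matrix. -/
attribute [local instance] Matrix.linftyOpNormedRing Matrix.linftyOpNormedAlgebra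

open Real Matrix

/-- Solutions of `f' = c f` are exponentials. -/
lemma entry_ode_sol (f : ℝ → ℂ) (c : ℂ)
    (hf : ∀ t : ℝ, HasDerivAt f (c * f t) t) :
    ∀ t : ℝ, f t = f 0 * Complex.exp (c * t) := by
  set g : ℝ → ℂ := fun t => f t * Complex.exp (-(c * t)) with hg
  have hcoe : ∀ t : ℝ, HasDerivAt (fun s : ℝ => (s : ℂ)) 1 t := by
    intro t
    exact Complex.ofRealCLM.hasDerivAt (x := t)
  have hgd : ∀ t : ℝ, HasDerivAt g 0 t := by
    intro t
    have h1 : HasDerivAt (fun s : ℝ => -(c * (s : ℂ))) (-c) t := by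
      have h1' := ((hcoe t).const_mul c).neg
      rw [mul_one] at h1'
      exact h1'
    have h2 := (hf t).mul h1.cexp
    exact h2.congr_deriv (by ring)
  have hconst : ∀ t : ℝ, g t = g 0 := by
    intro t
    have hdiff : Differentiable ℝ g := fun x => (hgd x).differentiableAt
    have hderiv : ∀ x : ℝ, deriv g x = 0 := fun x => (hgd x).deriv
    exact (is_const_of_deriv_eq_zero hdiff hderiv) t 0
  intro t
  have := hconst t
  simp only [hg] at this
  have hne : Complex.exp (-(c * t)) ≠ 0 := Complex.exp_ne_zero _
  have : f t * Complex.exp (-(c * t)) = f 0 := by simpa using this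
  calc f t = f t * Complex.exp (-(c * t)) * Complex.exp (c * t) := by
        rw [mul_assoc, ← Complex.exp_add]; simp
    _ = f 0 * Complex.exp (c * t) := by rw [this]

/-- If a periodic invertible loop `γ` stabilizes a loop-regular constant Cartan
element `(μ, 1)` under the gauge action (i.e. `γ' = i(γμ - μγ)`), then `γ` is a
constant loop with values in the diagonal Cartan subgroup. -/
theorem stabilizer_of_loop_regular_cartan_is_constant_cartan
    (n : ℕ) (hn : 1 ≤ n)
    (μ : Matrix (Fin n) (Fin n) ℂ) (hμ : μ.IsDiag)
    (hreg : ∀ a b : Fin n, a ≠ b →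
      Complex.exp (-(2 * (π : ℂ) * Complex.I) * μ a a) ≠
        Complex.exp (-(2 * (π : ℂ) * Complex.I) * μ b b))
    (γ : ℝ → Matrix (Fin n) (Fin n) ℂ)
    (hγinv : ∀ t : ℝ, IsUnit (γ t))
    (hγper : ∀ t : ℝ, γ (t + 2 * π) = γ t)
    (hγ : ∀ t : ℝ, HasDerivAt γ (Complex.I • (γ t * μ - μ * γ t)) t) :
    (∀ t : ℝ, γ t = γ 0) ∧ (γ 0).IsDiag := by
  -- entry evaluation as a continuous linear map
  have key : ∀ a b : Fin n, ∀ t : ℝ,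
      γ t a b = γ 0 a b * Complex.exp (Complex.I * (μ b b - μ a a) * t) := by
    intro a b
    set e : Matrix (Fin n) (Fin n) ℂ →L[ℝ] ℂ :=
      LinearMap.toContinuousLinearMap
        { toFun := fun M => M a b,
          map_add' := fun _ _ => rfl,
          map_smul' := fun _ _ => rfl } with he
    have heval : ∀ M : Matrix (Fin n) (Fin n) ℂ, e M = M a b := fun M => rfl
    apply entry_ode_sol
    intro t
    have h := (e.hasFDerivAt.comp_hasDerivAt t (hγ t))
    have hval : e (Complex.I • (γ t * μ - μ * γ t))
        = Complex.I * (μ b b - μ a a) * γ t a b := by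
      rw [heval]
      have h1 : (γ t * μ) a b = γ t a b * μ b b := by
        rw [Matrix.mul_apply]
        exact Finset.sum_eq_single b (fun k _ hk => by rw [hμ hk, mul_zero])
          (by simp)
      have h2 : (μ * γ t) a b = μ a a * γ t a b := by
        rw [Matrix.mul_apply]
        exact Finset.sum_eq_single a (fun k _ hk => by rw [hμ hk.symm, zero_mul])
          (by simp)
      simp only [Matrix.smul_apply, Matrix.sub_apply, h1, h2, smul_eq_mul]
      ring
    exact h.congr_deriv hval
  -- off-diagonal entries vanish
  have offdiag : ∀ a b : Fin n, a ≠ b → ∀ t : ℝ, γ t a b = 0 := by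
    intro a b hab t
    have hper : γ 0 a b * Complex.exp (Complex.I * (μ b b - μ a a) * (2 * π)) = γ 0 a b := by
      have := congrArg (fun M => M a b) (hγper 0)
      simp only [zero_add] at this
      rw [key a b (2 * π), key a b 0] at this
      simpa using this
    have hexp : Complex.exp (Complex.I * (μ b b - μ a a) * (2 * π)) ≠ 1 := by
      intro h1
      apply hreg a b hab
      have : (-(2 * (π : ℂ) * Complex.I) * μ a a)
          = (-(2 * (π : ℂ) * Complex.I) * μ b b) + Complex.I * (μ b b - μ a a) * (2 * π) := by
        push_cast; ring
      rw [this, Complex.exp_add, h1, mul_one]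
    have h0 : γ 0 a b = 0 := by
      have hz : γ 0 a b * (Complex.exp (Complex.I * (μ b b - μ a a) * (2 * π)) - 1) = 0 := by
        rw [mul_sub, hper]; ring
      rcases mul_eq_zero.mp hz with h' | h'
      · exact h'
      · exact absurd (sub_eq_zero.mp h') hexp
    rw [key a b t, h0, zero_mul]
  have hdiag : ∀ a : Fin n, ∀ t : ℝ, γ t a a = γ 0 a a := by
    intro a t
    rw [key a a t]
    simp
  constructor
  · intro t
    ext a b
    by_cases hab : a = b
    · subst hab; exact hdiag a t
    · rw [offdiag a b hab t, offdiag a b hab 0]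
  · intro a b hab
    exact offdiag a b hab 0
end

section
/- Let n ≥ 1 and let b : ℂ → M_n(ℂ) be a map each of whose entries is continuous on the closed unit disk and holomorphic on the open unit disk. Suppose b(0) is upper triangular with all diagonal entries equal to 1 (unipotent upper triangular). Let η ∈ M_n(ℂ) be diagonalizable, and suppose that for every z with |z| = 1 the characteristic polynomial of b(z) equals the characteristic polynomial of η. Then η = 1 (the identity matrix). -/
open Matrix Metric Polynomial

private lemma eval_charpoly_eq_det {n : ℕ} (M : Matrix (Fin n) (Fin n) ℂ) (t : ℂ) :
    (M.charpoly).eval t = (Matrix.diagonal (fun _ => t) - M).det := by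
  have h : (Matrix.charmatrix M).map (evalRingHom t) = Matrix.diagonal (fun _ => t) - M := by
    ext i j
    by_cases hij : i = j <;>
      simp [Matrix.charmatrix_apply, Matrix.map_apply, Matrix.diagonal_apply, hij]
  rw [Matrix.charpoly, show (Matrix.charmatrix M).det.eval t
      = evalRingHom t (Matrix.charmatrix M).det from rfl, RingHom.map_det,
    RingHom.mapMatrix_apply, h]

/-- If `b(z)` is a matrix-valued function, entrywise holomorphic on the open
unit disk and continuous on the closed disk, with `b(0)` unipotent upper
triangular, and `η` is diagonalizable with the same characteristic polynomial
as `b(z)` for every `z` on the unit circle, then `η = 1`. -/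
theorem cartan_element_conjugate_to_unipotent_loop_is_identity
    (n : ℕ) (hn : 1 ≤ n)
    (b : ℂ → Matrix (Fin n) (Fin n) ℂ)
    (hcont : ∀ i j : Fin n, ContinuousOn (fun z => b z i j) (closedBall (0 : ℂ) 1))
    (hdiff : ∀ i j : Fin n, DifferentiableOn ℂ (fun z => b z i j) (ball (0 : ℂ) 1))
    (hupper : ∀ i j : Fin n, j < i → b 0 i j = 0)
    (hdiagone : ∀ i : Fin n, b 0 i i = 1)
    (η : Matrix (Fin n) (Fin n) ℂ)
    (hdiagz : ∃ (g d : Matrix (Fin n) (Fin n) ℂ),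
      IsUnit g ∧ d.IsDiag ∧ η = g * d * g⁻¹)
    (hchar : ∀ z : ℂ, ‖z‖ = 1 → (b z).charpoly = η.charpoly) :
    η = 1 := by
  obtain ⟨g, d, hg, hd, hη⟩ := hdiagz
  have hgdet : IsUnit g.det := (Matrix.isUnit_iff_isUnit_det g).mp hg
  -- Step 1: the characteristic polynomial at `z = 0` equals that of `η`,
  -- by the maximum modulus principle applied to `z ↦ eval t (b z).charpoly`.
  have key : (b 0).charpoly = η.charpoly := by
    apply Polynomial.funext
    intro t
    have hfd : DiffContOnCl ℂ
        (fun z => (Matrix.diagonal (fun _ : Fin n => t) - b z).det) (ball (0 : ℂ) 1) := by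
      constructor
      · simp only [Matrix.det_apply']
        apply DifferentiableOn.fun_sum
        intro σ _
        apply DifferentiableOn.const_mul
        apply DifferentiableOn.fun_finsetProd
        intro i _
        exact (differentiableOn_const _).sub (hdiff (σ i) i)
      · rw [closure_ball (0 : ℂ) one_ne_zero]
        simp only [Matrix.det_apply']
        apply continuousOn_finset_sum
        intro σ _
        apply ContinuousOn.mul continuousOn_const
        apply continuousOn_finset_prod
        intro i _
        exact continuousOn_const.sub (hcont (σ i) i)
    have hgd : DiffContOnCl ℂ (fun _ : ℂ => η.charpoly.eval t) (ball (0 : ℂ) 1) :=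
      ⟨differentiableOn_const _, continuousOn_const⟩
    have heq : Set.EqOn (fun z => (Matrix.diagonal (fun _ : Fin n => t) - b z).det)
        (fun _ : ℂ => η.charpoly.eval t) (frontier (ball (0 : ℂ) 1)) := by
      intro z hz
      rw [frontier_ball (0 : ℂ) one_ne_zero, mem_sphere_zero_iff_norm] at hz
      have h1 : (b z).charpoly.eval t = η.charpoly.eval t := by rw [hchar z hz]
      rw [eval_charpoly_eq_det] at h1
      exact h1
    have h0 := Complex.eqOn_closure_of_eqOn_frontier isBounded_ball hfd hgd heq
      (subset_closure (mem_ball_self one_pos))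
    rw [eval_charpoly_eq_det]
    exact h0
  -- Step 2: `b 0` is unipotent upper triangular, so its charpoly is `(X - 1)^n`.
  have hb0 : (b 0).charpoly = (X - Polynomial.C 1) ^ n := by
    rw [Matrix.charpoly_of_upperTriangular (b 0) (fun i j hij => hupper i j hij)]
    simp [hdiagone]
  -- Step 3: charpoly of `η` equals charpoly of `d` (conjugation invariance,
  -- proved by evaluating at every point).
  have hconj : η.charpoly = d.charpoly := by
    apply Polynomial.funext
    intro t
    rw [eval_charpoly_eq_det, eval_charpoly_eq_det, hη]
    have h2 : Matrix.diagonal (fun _ : Fin n => t) - g * d * g⁻¹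
        = g * (Matrix.diagonal (fun _ : Fin n => t) - d) * g⁻¹ := by
      rw [Matrix.mul_sub, Matrix.sub_mul]
      congr 1
      have hdiag : Matrix.diagonal (fun _ : Fin n => t) = t • (1 : Matrix (Fin n) (Fin n) ℂ) := by
        rw [Matrix.smul_one_eq_diagonal]
      rw [hdiag, Matrix.mul_smul, Matrix.mul_one, Matrix.smul_mul,
        Matrix.mul_nonsing_inv g hgdet]
    rw [h2, Matrix.det_mul, Matrix.det_mul, mul_comm, ← mul_assoc, ← Matrix.det_mul,
      ← Matrix.det_mul, Matrix.nonsing_inv_mul g hgdet, Matrix.one_mul]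
  -- Step 4: deduce that every diagonal entry of `d` is `1`.
  have hdchar : d.charpoly = ∏ i : Fin n, (X - Polynomial.C (d i i)) :=
    Matrix.charpoly_of_upperTriangular d (fun i j hij => hd (ne_of_gt hij))
  have hdone : ∀ i : Fin n, d i i = 1 := by
    intro i
    have h : (∏ j : Fin n, (X - Polynomial.C (d j j))) = (X - Polynomial.C 1) ^ n := by
      rw [← hdchar, ← hconj, ← key, hb0]
    have heval := congrArg (Polynomial.eval (d i i)) h
    simp only [Polynomial.eval_prod, Polynomial.eval_pow, Polynomial.eval_sub,
      Polynomial.eval_X, Polynomial.eval_C] at heval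
    have hz : ∏ j : Fin n, (d i i - d j j) = 0 :=
      Finset.prod_eq_zero (Finset.mem_univ i) (sub_self _)
    rw [hz] at heval
    have h0 : d i i - 1 = 0 :=
      pow_eq_zero_iff (n := n) (by omega) |>.mp heval.symm
    exact sub_eq_zero.mp h0
  -- Step 5: conclude `d = 1` and hence `η = 1`.
  have hdeq : d = 1 := by
    ext i j
    by_cases hij : i = j
    · subst hij; simp [hdone i, Matrix.one_apply]
    · simp [Matrix.one_apply, hij, hd hij]
  rw [hη, hdeq, mul_one, Matrix.mul_nonsing_inv g hgdet]
end
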